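/- arXiv:2109.12223 — 2 statements merged into one kernel-verified Lean document; each statement's English description precedes it below -/
import Mathlib

section
/- Let R → S be a faithfully flat homomorphism of commutative rings and let G be a finite group acting on S by R-algebra automorphisms. Suppose that the R-algebra homomorphism S ⊗_R S → ∏_{g∈G} S determined on pure tensors by s ⊗ s' ↦ (s · (g • s'))_{g∈G} is bijective. Then the map R → S is injective and its image is exactly the subring of invariants S^G = {s ∈ S : g • s = s for all g ∈ G}; that is, R → S^G is a ring isomorphism. -/
open scoped TensorProduct
open TensorProduct

section
variable (R S : Type*) [CommRing R] [CommRing S] [Algebra R S]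
    [Module.FaithfullyFlat R S]

/-- The "difference" map `s ↦ 1 ⊗ s - s ⊗ 1`. -/
noncomputable def dmap : S →ₗ[R] S ⊗[R] S :=
  TensorProduct.mk R S S 1 - (TensorProduct.mk R S S).flip 1

omit [Module.FaithfullyFlat R S] in
lemma dmap_apply (s : S) : dmap R S s = 1 ⊗ₜ[R] s - s ⊗ₜ[R] 1 := rfl

lemma exact_alg_dmap : Function.Exact (Algebra.linearMap R S) (dmap R S) := by
  apply Module.FaithfullyFlat.rTensor_reflects_exact R S
  set f := Algebra.linearMap R S
  set m2 : (S ⊗[R] S) ⊗[R] S →ₗ[R] S ⊗[R] S :=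
    ((LinearMap.mul' R S).lTensor S) ∘ₗ (TensorProduct.assoc R S S S).toLinearMap
  have key : m2 ∘ₗ (dmap R S).rTensor S =
      (TensorProduct.mk R S S 1) ∘ₗ (LinearMap.mul' R S) - LinearMap.id := by
    apply TensorProduct.ext'
    intro s t
    simp only [m2, LinearMap.comp_apply, LinearMap.rTensor_tmul, dmap_apply, sub_tmul,
      map_sub, LinearEquiv.coe_coe, assoc_tmul, LinearMap.lTensor_tmul, LinearMap.mul'_apply,
      LinearMap.sub_apply, LinearMap.id_apply, TensorProduct.mk_apply, one_mul, mul_one]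
  intro y
  constructor
  · intro hy
    have h1 : m2 ((dmap R S).rTensor S y) = 0 := by rw [hy]; simp
    rw [← LinearMap.comp_apply, key] at h1
    simp only [LinearMap.sub_apply, LinearMap.comp_apply, LinearMap.id_apply, sub_eq_zero] at h1
    exact ⟨(1 : R) ⊗ₜ[R] (LinearMap.mul' R S y), by
      simp only [LinearMap.rTensor_tmul, f, Algebra.linearMap_apply, map_one, h1,
        TensorProduct.mk_apply]
      exact h1⟩
  · rintro ⟨x, rfl⟩
    rw [← LinearMap.comp_apply, ← LinearMap.rTensor_comp]
    have : (dmap R S) ∘ₗ f = 0 := by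
      ext
      simp [dmap_apply, f, Algebra.algebraMap_eq_smul_one, ← smul_tmul, smul_tmul']
    rw [this]
    simp

end

/-- Let `R → S` be a faithfully flat homomorphism of commutative rings and let `G` be a
finite group acting on `S` by `R`-algebra automorphisms.  Suppose that the `R`-linear map
`S ⊗[R] S → ∏_{g ∈ G} S` determined on pure tensors by `s ⊗ s' ↦ (s * (g • s'))_{g ∈ G}`
is bijective.  Then `algebraMap R S` is injective and its image is exactly the subring of
`G`-invariants of `S`; that is, `R → S^G` is a ring isomorphism. -/
theorem faithfully_flat_torsor_invariants
    (R S : Type*) [CommRing R] [CommRing S] [Algebra R S]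
    [Module.FaithfullyFlat R S]
    (G : Type*) [Group G] [Finite G]
    [MulSemiringAction G S] [SMulCommClass G R S]
    (φ : S ⊗[R] S →ₗ[R] (G → S))
    (hφ : ∀ s s' : S, φ (s ⊗ₜ[R] s') = fun g : G => s * (g • s'))
    (hbij : Function.Bijective φ) :
    Function.Injective (algebraMap R S) ∧
      Set.range (algebraMap R S) = {s : S | ∀ g : G, g • s = s} := by
  constructor
  · -- injectivity from faithful flatness
    rw [injective_iff_map_eq_zero]
    intro r hr
    have hsr : ∀ s : S, s ⊗ₜ[R] r = (0 : S ⊗[R] R) := fun s => by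
      have h1 : s ⊗ₜ[R] r = r • (s ⊗ₜ[R] (1 : R)) := by
        rw [← TensorProduct.tmul_smul, smul_eq_mul, mul_one]
      rw [h1, TensorProduct.smul_tmul', Algebra.smul_def, hr, zero_mul, zero_tmul]
    have h0 : LinearMap.lTensor S (LinearMap.toSpanSingleton R R r) = 0 := by
      apply TensorProduct.ext'
      intro s x
      simp only [LinearMap.lTensor_tmul, LinearMap.toSpanSingleton_apply, LinearMap.zero_apply]
      rw [TensorProduct.tmul_smul, hsr, smul_zero]
    have := (Module.FaithfullyFlat.zero_iff_lTensor_zero R S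
      (LinearMap.toSpanSingleton R R r)).2 h0
    simpa using congr($(this) 1)
  · ext s
    constructor
    · rintro ⟨r, rfl⟩ g
      rw [Algebra.algebraMap_eq_smul_one, smul_comm, smul_one]
    · intro hs
      have heq : φ ((1 : S) ⊗ₜ[R] s) = φ (s ⊗ₜ[R] (1 : S)) := by
        rw [hφ, hφ]
        funext g
        rw [one_mul, hs g, smul_one, mul_one]
      have h2 : (1 : S) ⊗ₜ[R] s = s ⊗ₜ[R] (1 : S) := hbij.injective heq
      have h3 : dmap R S s = 0 := by rw [dmap_apply, h2, sub_self]
      obtain ⟨r, hr⟩ := (exact_alg_dmap R S s).1 h3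
      exact ⟨r, hr⟩
end

section
/- Let a and n be positive integers, let d = gcd(a, n), and let d_a, d_n be positive integers with d = d_a · d_n, gcd(d_a, d_n) = 1, gcd(d_a, n/d) = 1, and gcd(d_n, a/d) = 1. Then for every complex number μ with μ^a = 1, there exist a nonzero complex number s, a complex number ξ₁ with ξ₁^{d_a} = 1, and a complex number ξ₂ with ξ₂^{d_n} = 1, such that ξ₂ · s^{n/d} = μ and ξ₁ · s^{-(a/d)} = 1. Equivalently, the image of the group homomorphism ℂ* × μ_{d_a} × μ_{d_n} → ℂ* × ℂ*, (s, ξ₁, ξ₂) ↦ (ξ₂ s^{n/d}, ξ₁ s^{-a/d}), contains the subgroup μ_a × {1}. -/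
/-- Let `a` and `n` be positive integers, `d = gcd(a, n)`, and `d_a, d_n` positive integers
with `d = d_a * d_n`, `gcd(d_a, d_n) = 1`, `gcd(d_a, n/d) = 1`, and `gcd(d_n, a/d) = 1`.
Then for every complex `a`-th root of unity `μ` there exist a nonzero complex number `s`,
a `d_a`-th root of unity `ξ₁`, and a `d_n`-th root of unity `ξ₂`, such that
`ξ₂ * s ^ (n/d) = μ` and `ξ₁ * s ^ (-(a/d)) = 1`. -/
theorem roots_of_unity_in_image (a n : ℕ) (ha : 0 < a) (hn : 0 < n)
    (da dn : ℕ) (hda : 0 < da) (hdn : 0 < dn)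
    (hmul : Nat.gcd a n = da * dn)
    (h₁ : Nat.Coprime da dn)
    (h₂ : Nat.Coprime da (n / Nat.gcd a n))
    (h₃ : Nat.Coprime dn (a / Nat.gcd a n)) :
    ∀ μ : ℂ, μ ^ a = 1 →
      ∃ (s ξ₁ ξ₂ : ℂ), s ≠ 0 ∧ ξ₁ ^ da = 1 ∧ ξ₂ ^ dn = 1 ∧
        ξ₂ * s ^ (n / Nat.gcd a n) = μ ∧
        ξ₁ * s ^ (-((a / Nat.gcd a n : ℕ) : ℤ)) = 1 := by
  intro μ hμ
  set d := Nat.gcd a n with hd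
  set a' := a / d with ha'
  set n' := n / d with hn'
  have hdpos : 0 < d := Nat.gcd_pos_of_pos_left n ha
  have hda' : a = d * a' := (Nat.mul_div_cancel' (Nat.gcd_dvd_left a n)).symm
  -- a = dn * (da * a')
  have haeq : a = dn * (da * a') := by
    rw [hda', hmul]; ring
  -- coprimalities
  have hca'n' : Nat.Coprime a' n' := Nat.coprime_div_gcd_div_gcd hdpos
  have hc1 : Nat.Coprime dn (da * a') := (h₁.symm).mul_right h₃
  have hc2 : Nat.Coprime n' (da * a') := (h₂.symm).mul_right hca'n'.symm
  obtain ⟨x, y, hxy⟩ := (Nat.isCoprime_iff_coprime.mpr hc1)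
  obtain ⟨u, v, huv⟩ := (Nat.isCoprime_iff_coprime.mpr hc2)
  have hμ0 : μ ≠ 0 := by
    intro h; rw [h, zero_pow ha.ne'] at hμ; exact zero_ne_one hμ
  have hμz : μ ^ (a : ℤ) = 1 := by rw [zpow_natCast, hμ]
  set m : ℕ := da * a' with hm
  set ν : ℂ := μ ^ (x * dn) with hν
  have hν0 : ν ≠ 0 := zpow_ne_zero _ hμ0
  have hνm : ν ^ (m : ℤ) = 1 := by
    rw [hν, ← zpow_mul]
    have : x * (dn : ℤ) * m = a * x := by
      push_cast [haeq]; ring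
    rw [this, zpow_mul, hμz, one_zpow]
  set s : ℂ := ν ^ u with hs
  have hs0 : s ≠ 0 := zpow_ne_zero _ hν0
  have hsm : s ^ (m : ℤ) = 1 := by
    rw [hs, ← zpow_mul, mul_comm, zpow_mul, hνm, one_zpow]
  refine ⟨s, s ^ (a' : ℤ), μ ^ (y * m), hs0, ?_, ?_, ?_, ?_⟩
  · -- (s^a')^da = s^m = 1
    rw [← zpow_natCast (s ^ (a' : ℤ)) da, ← zpow_mul]
    have : (a' : ℤ) * da = (m : ℤ) := by push_cast [hm]; ring
    rw [this, hsm]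
  · -- (μ^(y*m))^dn = μ^a y... = 1
    rw [← zpow_natCast (μ ^ (y * m)) dn, ← zpow_mul]
    have : y * (m : ℤ) * dn = a * y := by push_cast [haeq]; ring
    rw [this, zpow_mul, hμz, one_zpow]
  · -- μ^(y*m) * s^n' = μ
    have hsn' : s ^ (n' : ℤ) = ν := by
      rw [hs, ← zpow_mul]
      have hun : u * (n' : ℤ) = 1 - (m : ℤ) * v := by linarith [huv]
      rw [hun, zpow_sub₀ hν0, zpow_one, zpow_mul, hνm, one_zpow, div_one]
    have : s ^ n' = ν := by rw [← zpow_natCast s n', hsn']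
    rw [this, hν, ← zpow_add₀ hμ0]
    have : y * (m : ℤ) + x * dn = 1 := by linarith [hxy]
    rw [this, zpow_one]
  · rw [← zpow_add₀ hs0]
    simp
end
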